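/- In any model, satisfaction of the indexed formula ⋀_J φ(J) at a state implies satisfaction of each instantiation φ(C) for any particular choice C of |J| distinct agents; conversely, if the model is symmetric under all agent permutations (permutations preserve transitions, epistemic relations, valuations, and the initial state), then satisfaction of one instantiation φ({1,…,|J|}) at the initial state implies satisfaction of all instantiations. -/
import Mathlib


-- State and path formulas of ACTL*K without next, in negation normal form,
-- with atoms and epistemic modalities indexed by agents in `A`.
mutual
inductive SForm (AP A : Type) : Type where
  | atom : AP → A → SForm AP A
  | natom : AP → A → SForm AP A
  | sand : SForm AP A → SForm AP A → SForm AP A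
  | sor : SForm AP A → SForm AP A → SForm AP A
  | know : A → SForm AP A → SForm AP A
  | aall : PForm AP A → SForm AP A

inductive PForm (AP A : Type) : Type where
  | ofState : SForm AP A → PForm AP A
  | pand : PForm AP A → PForm AP A → PForm AP A
  | por : PForm AP A → PForm AP A → PForm AP A
  | puntil : PForm AP A → PForm AP A → PForm AP A
  | prelease : PForm AP A → PForm AP A → PForm AP A
end

-- Renaming of agent indices in a formula.
mutual
def renameS {AP A B : Type} (f : A → B) : SForm AP A → SForm AP B
  | .atom p i => .atom p (f i)
  | .natom p i => .natom p (f i)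
  | .sand φ ψ => .sand (renameS f φ) (renameS f ψ)
  | .sor φ ψ => .sor (renameS f φ) (renameS f ψ)
  | .know i φ => .know (f i) (renameS f φ)
  | .aall φ => .aall (renameP f φ)

def renameP {AP A B : Type} (f : A → B) : PForm AP A → PForm AP B
  | .ofState φ => .ofState (renameS f φ)
  | .pand φ ψ => .pand (renameP f φ) (renameP f ψ)
  | .por φ ψ => .por (renameP f φ) (renameP f ψ)
  | .puntil φ ψ => .puntil (renameP f φ) (renameP f ψ)
  | .prelease φ ψ => .prelease (renameP f φ) (renameP f ψ)
end

/-- A model with action-labeled transitions: global states, actions, a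
labeled transition relation, an initial state, epistemic indistinguishability
relations, and an indexed valuation. -/
structure LModel (AP A : Type) where
  G : Type
  Act : Type
  R : Act → G → G → Prop
  init : G
  eqv : A → G → G → Prop
  val : G → AP → A → Prop

def LModel.ValidPath {AP A : Type} (M : LModel AP A) (π : ℕ → M.G)
    (α : ℕ → M.Act) : Prop :=
  ∀ j, M.R (α j) (π j) (π (j + 1))

def shiftPath {G : Type} (π : ℕ → G) (i : ℕ) : ℕ → G := fun j => π (i + j)

-- Satisfaction of state formulas at states and of path formulas on paths.
mutual
def ssat {AP A : Type} (M : LModel AP A) : SForm AP A → M.G → Prop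
  | .atom p i, g => M.val g p i
  | .natom p i, g => ¬ M.val g p i
  | .sand φ ψ, g => ssat M φ g ∧ ssat M ψ g
  | .sor φ ψ, g => ssat M φ g ∨ ssat M ψ g
  | .know i φ, g => ∀ g', M.eqv i g g' → ssat M φ g'
  | .aall φ, g => ∀ π α, M.ValidPath π α → π 0 = g → psat M φ π

def psat {AP A : Type} (M : LModel AP A) : PForm AP A → (ℕ → M.G) → Prop
  | .ofState φ, π => ssat M φ (π 0)
  | .pand φ ψ, π => psat M φ π ∧ psat M ψ π
  | .por φ ψ, π => psat M φ π ∨ psat M ψ π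
  | .puntil φ ψ, π => ∃ i, psat M ψ (shiftPath π i) ∧ ∀ j < i, psat M φ (shiftPath π j)
  | .prelease φ ψ, π => ∀ i, (∀ j < i, ¬ psat M φ (shiftPath π j)) → psat M ψ (shiftPath π i)
end

section Aux

variable {AP A : Type} {n : ℕ}

theorem validPath_perm (M : LModel AP (Fin n))
    (ζAct : M.Act ≃ M.Act) (ζS : M.G ≃ M.G)
    (hR : ∀ a g g', M.R a g g' ↔ M.R (ζAct a) (ζS g) (ζS g')) (π : ℕ → M.G) (α : ℕ → M.Act) :
    M.ValidPath π α ↔ M.ValidPath (fun j => ζS (π j)) (fun j => ζAct (α j)) := by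
  constructor
  · intro h j; exact (hR _ _ _).mp (h j)
  · intro h j; exact (hR _ _ _).mpr (h j)

mutual
theorem ssat_perm (M : LModel AP (Fin n)) (ζ : Equiv.Perm (Fin n))
    (ζS : M.G ≃ M.G) (ζAct : M.Act ≃ M.Act)
    (hR : ∀ a g g', M.R a g g' ↔ M.R (ζAct a) (ζS g) (ζS g'))
    (hE : ∀ i g g', M.eqv i g g' ↔ M.eqv (ζ i) (ζS g) (ζS g'))
    (hV : ∀ g p i, M.val g p i ↔ M.val (ζS g) p (ζ i)) (f : A → Fin n) :
    ∀ (φ : SForm AP A) (g : M.G),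
      ssat M (renameS f φ) g ↔ ssat M (renameS (fun a => ζ (f a)) φ) (ζS g)
  | .atom p i, g => by simpa [renameS, ssat] using hV g p (f i)
  | .natom p i, g => by simpa [renameS, ssat] using not_congr (hV g p (f i))
  | .sand φ ψ, g => by
      simpa [renameS, ssat] using
        and_congr (ssat_perm M ζ ζS ζAct hR hE hV f φ g) (ssat_perm M ζ ζS ζAct hR hE hV f ψ g)
  | .sor φ ψ, g => by
      simpa [renameS, ssat] using
        or_congr (ssat_perm M ζ ζS ζAct hR hE hV f φ g) (ssat_perm M ζ ζS ζAct hR hE hV f ψ g)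
  | .know i φ, g => by
      simp only [renameS, ssat]
      constructor
      · intro h g' hg'
        have : M.eqv (f i) g (ζS.symm g') := by
          have := (hE (f i) g (ζS.symm g')).symm
          simpa using this.mp (by simpa using hg')
        have := (ssat_perm M ζ ζS ζAct hR hE hV f φ (ζS.symm g')).mp (h _ this)
        simpa using this
      · intro h g' hg'
        exact (ssat_perm M ζ ζS ζAct hR hE hV f φ g').mpr (h (ζS g') ((hE (f i) g g').mp hg'))
  | .aall φ, g => by
      simp only [renameS, ssat]
      constructor
      · intro h π α hval h0
        have hval' : M.ValidPath (fun j => ζS.symm (π j)) (fun j => ζAct.symm (α j)) := by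
          intro j
          have := (hR (ζAct.symm (α j)) (ζS.symm (π j)) (ζS.symm (π (j+1)))).mpr
          simpa using this (by simpa using hval j)
        have h1 := h _ _ hval' (by rw [h0]; simp)
        have := (psat_perm M ζ ζS ζAct hR hE hV f φ (fun j => ζS.symm (π j))).mp h1
        simpa using this
      · intro h π α hval h0
        have h1 := h _ _ ((validPath_perm M ζAct ζS hR π α).mp hval) (by rw [h0])
        exact (psat_perm M ζ ζS ζAct hR hE hV f φ π).mpr h1

theorem psat_perm (M : LModel AP (Fin n)) (ζ : Equiv.Perm (Fin n))
    (ζS : M.G ≃ M.G) (ζAct : M.Act ≃ M.Act)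
    (hR : ∀ a g g', M.R a g g' ↔ M.R (ζAct a) (ζS g) (ζS g'))
    (hE : ∀ i g g', M.eqv i g g' ↔ M.eqv (ζ i) (ζS g) (ζS g'))
    (hV : ∀ g p i, M.val g p i ↔ M.val (ζS g) p (ζ i)) (f : A → Fin n) :
    ∀ (φ : PForm AP A) (π : ℕ → M.G),
      psat M (renameP f φ) π ↔ psat M (renameP (fun a => ζ (f a)) φ) (fun j => ζS (π j))
  | .ofState φ, π => by
      simpa [renameP, psat] using ssat_perm M ζ ζS ζAct hR hE hV f φ (π 0)
  | .pand φ ψ, π => by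
      simpa [renameP, psat] using
        and_congr (psat_perm M ζ ζS ζAct hR hE hV f φ π) (psat_perm M ζ ζS ζAct hR hE hV f ψ π)
  | .por φ ψ, π => by
      simpa [renameP, psat] using
        or_congr (psat_perm M ζ ζS ζAct hR hE hV f φ π) (psat_perm M ζ ζS ζAct hR hE hV f ψ π)
  | .puntil φ ψ, π => by
      simp only [renameP, psat]
      apply exists_congr; intro i
      have hshift : ∀ i, (fun j => ζS (shiftPath π i j)) = shiftPath (fun j => ζS (π j)) i :=
        fun i => rfl
      constructor
      · rintro ⟨h1, h2⟩
        refine ⟨(hshift i) ▸ (psat_perm M ζ ζS ζAct hR hE hV f ψ (shiftPath π i)).mp h1, fun j hj =>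
          (hshift j) ▸ (psat_perm M ζ ζS ζAct hR hE hV f φ (shiftPath π j)).mp (h2 j hj)⟩
      · rintro ⟨h1, h2⟩
        exact ⟨(psat_perm M ζ ζS ζAct hR hE hV f ψ (shiftPath π i)).mpr ((hshift i) ▸ h1), fun j hj =>
          (psat_perm M ζ ζS ζAct hR hE hV f φ (shiftPath π j)).mpr ((hshift j) ▸ h2 j hj)⟩
  | .prelease φ ψ, π => by
      simp only [renameP, psat]
      have hshift : ∀ i, (fun j => ζS (shiftPath π i j)) = shiftPath (fun j => ζS (π j)) i :=
        fun i => rfl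
      constructor
      · intro h i hi
        refine (hshift i) ▸ (psat_perm M ζ ζS ζAct hR hE hV f ψ (shiftPath π i)).mp (h i fun j hj hc => ?_)
        exact hi j hj ((hshift j) ▸ (psat_perm M ζ ζS ζAct hR hE hV f φ (shiftPath π j)).mp hc)
      · intro h i hi
        refine (psat_perm M ζ ζS ζAct hR hE hV f ψ (shiftPath π i)).mpr ((hshift i) ▸ h i fun j hj hc => ?_)
        exact hi j hj ((psat_perm M ζ ζS ζAct hR hE hV f φ (shiftPath π j)).mpr ((hshift j) ▸ hc))
end

end Aux
/-- (1) Satisfaction of the indexed formula `⋀_J φ(J)` (the conjunction of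
all instantiations `φ(C)` over tuples `C` of `|J|` distinct agents) at a
state implies satisfaction of each particular instantiation `φ(C)`.
(2) Conversely, if the model is symmetric under all agent permutations
(every permutation of the agents lifts to bijections on states and actions
preserving transitions, epistemic relations and valuations, and fixing the
initial state), then satisfaction of the single instantiation `φ({1,…,|J|})`
at the initial state implies satisfaction of all instantiations. -/
theorem indexed_formula_symmetry {AP : Type} (n k : ℕ) (hk : k ≤ n)
    (M : LModel AP (Fin n)) (φ : SForm AP (Fin k)) :
    (∀ g : M.G,
      (∀ C : Fin k ↪ Fin n, ssat M (renameS (⇑C) φ) g) →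
        ∀ C : Fin k ↪ Fin n, ssat M (renameS (⇑C) φ) g)
    ∧
    ((∀ ζ : Equiv.Perm (Fin n), ∃ (ζS : M.G ≃ M.G) (ζAct : M.Act ≃ M.Act),
        ζS M.init = M.init ∧
        (∀ a g g', M.R a g g' ↔ M.R (ζAct a) (ζS g) (ζS g')) ∧
        (∀ i g g', M.eqv i g g' ↔ M.eqv (ζ i) (ζS g) (ζS g')) ∧
        (∀ g p i, M.val g p i ↔ M.val (ζS g) p (ζ i))) →
      ssat M (renameS (Fin.castLE hk) φ) M.init →
        ∀ C : Fin k ↪ Fin n, ssat M (renameS (⇑C) φ) M.init) := by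
  constructor
  · intro g h C; exact h C
  · intro hsym h C
    classical
    have hinj : Function.Injective (Fin.castLE hk) := Fin.castLE_injective hk
    let e : {x // x ∈ Set.range (Fin.castLE hk)} ≃ {x // x ∈ Set.range ⇑C} :=
      (Equiv.ofInjective _ hinj).symm.trans (Equiv.ofInjective _ C.injective)
    let ζ := e.extendSubtype
    obtain ⟨ζS, ζAct, hinit, hR, hE, hV⟩ := hsym ζ
    have hζ : ∀ i, ζ (Fin.castLE hk i) = C i := by
      intro i
      have hm : Fin.castLE hk i ∈ Set.range (Fin.castLE hk) := ⟨i, rfl⟩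
      rw [show ζ = e.extendSubtype from rfl, Equiv.extendSubtype_apply_of_mem e _ hm]
      have h1 : (⟨Fin.castLE hk i, hm⟩ : {x // x ∈ Set.range (Fin.castLE hk)}) =
          Equiv.ofInjective _ hinj i := rfl
      rw [h1]
      simp [e]
    have hmain := (ssat_perm M ζ ζS ζAct hR hE hV (Fin.castLE hk) φ M.init).mp h
    rw [hinit] at hmain
    have heq : (fun a => ζ (Fin.castLE hk a)) = ⇑C := funext hζ
    rwa [heq] at hmain
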